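/- arXiv:math/9811013 — 5 statements merged into one kernel-verified Lean document; each statement's English description precedes it below -/
import Mathlib

section
/- Let V be a ℚ(q)-vector space with basis {v_j : j ∈ J} where J = {±1, …, ±n}, ordered by 1 ≺ 2 ≺ ⋯ ≺ n ≺ −n ≺ ⋯ ≺ −1. Let W₁ ⊆ V ⊗ V be the subspace spanned by: v_i ⊗ v_i (all i), v_i ⊗ v_j + q v_j ⊗ v_i for i ≻ j with i ≠ ±j, v_{−i} ⊗ v_i + q² v_i ⊗ v_{−i} + q(v_{i+1} ⊗ v_{−i−1} + v_{−i−1} ⊗ v_{i+1}) for 1 ≤ i < n, and v_1 ⊗ v_{−1} + v_{−1} ⊗ v_1. Then ∑_{i=1}^{n} (−q)^{−(i−1)} v_{−i} ⊗ v_i ≡ −q^{−(2n−2)} ∑_{i=1}^{n} (−q)^{i−1} v_i ⊗ v_{−i} modulo W₁. -/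
open TensorProduct Finset

noncomputable section

abbrev K : Type := RatFunc ℚ
abbrev V : Type := ℤ →₀ K

/-- `q` in the field of rational functions `ℚ(q)`. -/
def q : K := RatFunc.X

/-- basis vectors `v_j` -/
def v (j : ℤ) : V := Finsupp.single j 1

/-- position of `j` in the order `1 ≺ 2 ≺ ⋯ ≺ n ≺ −n ≺ ⋯ ≺ −1`. -/
def ord (n j : ℤ) : ℤ := if 0 < j then j else 2 * n + 1 + j

/-- the common wedge relations -/
def commonRels (n : ℤ) : Set (V ⊗[K] V) :=
  {x | ∃ i : ℤ, 1 ≤ |i| ∧ |i| ≤ n ∧ x = v i ⊗ₜ[K] v i} ∪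
  {x | ∃ i j : ℤ, 1 ≤ |i| ∧ |i| ≤ n ∧ 1 ≤ |j| ∧ |j| ≤ n ∧
        ord n j < ord n i ∧ i ≠ j ∧ i ≠ -j ∧
        x = v i ⊗ₜ[K] v j + q • (v j ⊗ₜ[K] v i)} ∪
  {x | ∃ i : ℤ, 1 ≤ i ∧ i < n ∧
        x = v (-i) ⊗ₜ[K] v i + q ^ 2 • (v i ⊗ₜ[K] v (-i)) +
            q • (v (i+1) ⊗ₜ[K] v (-(i+1)) + v (-(i+1)) ⊗ₜ[K] v (i+1))}

/-- `W₁`: common relations plus `v₁ ⊗ v₋₁ + v₋₁ ⊗ v₁` -/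
def W₁ (n : ℤ) : Submodule K (V ⊗[K] V) :=
  Submodule.span K (commonRels n ∪ {v 1 ⊗ₜ[K] v (-1) + v (-1) ⊗ₜ[K] v 1})

/-- `W₂`: common relations plus `v₋ₙ ⊗ vₙ + q² vₙ ⊗ v₋ₙ` -/
def W₂ (n : ℤ) : Submodule K (V ⊗[K] V) :=
  Submodule.span K (commonRels n ∪ {v (-n) ⊗ₜ[K] v n + q ^ 2 • (v n ⊗ₜ[K] v (-n))})

/- ---------- auxiliary material ---------- -/

lemma hq0 : q ≠ 0 := RatFunc.X_ne_zero

lemma hnq0 : -q ≠ 0 := neg_ne_zero.mpr hq0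

/-- the auxiliary scalars `μ m = 1 + q⁻² + ⋯ + q^{-2m}` -/
def μaux : ℕ → K
  | 0 => 1
  | m+1 => 1 + q⁻¹ * q⁻¹ * μaux m

lemma Xsplit (m : ℕ) : q ^ (-(2 * ((m:ℤ)+1))) = q⁻¹ * q⁻¹ * q ^ (-(2 * (m:ℤ))) := by
  rw [show (q:K)⁻¹ = q ^ (-1:ℤ) from (zpow_neg_one q).symm, ← zpow_add₀ hq0,
    ← zpow_add₀ hq0]
  congr 1
  ring

lemma μaux_rec (m : ℕ) : μaux (m+1) = q ^ (-(2 * ((m:ℤ)+1))) + μaux m := by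
  induction m with
  | zero =>
    have h1 : μaux 1 = 1 + q⁻¹ * q⁻¹ * μaux 0 := rfl
    have h0 : μaux 0 = (1 : K) := rfl
    have hx := Xsplit 0
    have h00 : q ^ (-0 : ℤ) = (1 : K) := by norm_num
    push_cast at hx ⊢
    linear_combination h1 + (q⁻¹ * q⁻¹ - 1) * h0 - hx - (q⁻¹ * q⁻¹) * h00
  | succ m ih =>
    have h1 : μaux (m+2) = 1 + q⁻¹ * q⁻¹ * μaux (m+1) := rfl
    have h2 : μaux (m+1) = 1 + q⁻¹ * q⁻¹ * μaux m := rfl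
    have hx := Xsplit (m+1)
    push_cast at hx ih ⊢
    linear_combination h1 - h2 + (q⁻¹ * q⁻¹) * ih - hx

lemma key {R M : Type*} [CommRing R] [AddCommGroup M] [Module R M]
    (Ak Bk Ak1 Bk1 SA SB : M) (Q c X Y μk μk1 : R)
    (hc : Q * c = 1) (hX : X = c * c * Y)
    (h1 : μk = 1 + c * c * μk1) (h2 : μk = X + μk1) :
    (Ak + (-c) • SA) + X • (Bk + (-Q) • SB) - μk • (Ak + Bk)
      = (-c) • ((SA + Y • SB) - μk1 • (Ak1 + Bk1))
        + (-(c * c * μk1)) • (Ak + Q ^ 2 • Bk + Q • (Bk1 + Ak1)) := by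
  match_scalars
  · linear_combination -h1
  · ring
  · linear_combination -h2 + μk1 * (Q * c + 1) * hc
  · linear_combination -Q * hX - c * Y * hc
  · linear_combination c * μk1 * hc
  · linear_combination c * μk1 * hc

lemma Icc_split (k n : ℤ) (h : k ≤ n) :
    Icc k n = insert k (Icc (k+1) n) := by
  ext x
  simp only [mem_Icc, mem_insert]
  omega

lemma smulA (k i : ℤ) (x : V ⊗[K] V) :
    (-q)^(k - i) • x = (-(q⁻¹)) • ((-q)^(k + 1 - i) • x) := by
  rw [smul_smul]
  congr 1
  have h1 : -(q⁻¹) = (-q) ^ (-1 : ℤ) := by rw [zpow_neg_one, inv_neg]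
  rw [h1, ← zpow_add₀ hnq0]
  congr 1
  ring

lemma smulB (k i : ℤ) (x : V ⊗[K] V) :
    (-q)^(i - k) • x = (-q) • ((-q)^(i - (k + 1)) • x) := by
  rw [smul_smul]
  congr 1
  rw [← zpow_one_add₀ hnq0]
  congr 1
  ring

lemma main (n : ℤ) (m : ℕ) (hm : (m:ℤ) < n) :
    ((∑ i ∈ Icc (n - (m:ℤ)) n, (-q) ^ (n - (m:ℤ) - i) • (v (-i) ⊗ₜ[K] v i))
      + q ^ (-(2 * (m:ℤ))) •
        (∑ i ∈ Icc (n - (m:ℤ)) n, (-q) ^ (i - (n - (m:ℤ))) • (v i ⊗ₜ[K] v (-i)))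
      - μaux m • (v (-(n - (m:ℤ))) ⊗ₜ[K] v (n - (m:ℤ)) + v (n - (m:ℤ)) ⊗ₜ[K] v (-(n - (m:ℤ)))))
      ∈ Submodule.span K (commonRels n) := by
  induction m with
  | zero =>
    rw [Nat.cast_zero, sub_zero, Icc_self, sum_singleton, sum_singleton, sub_self,
      mul_zero, neg_zero]
    simp only [zpow_zero, one_smul]
    rw [show μaux 0 = (1:K) from rfl, one_smul, sub_self]
    exact zero_mem _
  | succ m ih =>
    have hm' : (m : ℤ) < n := by push_cast at hm; omega
    have ih' := ih hm'
    push_cast at hm ⊢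
    set k : ℤ := n - ((m:ℤ) + 1) with hk
    have hk1 : 1 ≤ k := by omega
    have hk2 : k < n := by omega
    have hk3 : n - (m:ℤ) = k + 1 := by omega
    rw [hk3] at ih'
    -- the relation r_k
    have hr : (v (-k) ⊗ₜ[K] v k + q ^ 2 • (v k ⊗ₜ[K] v (-k)) +
          q • (v (k+1) ⊗ₜ[K] v (-(k+1)) + v (-(k+1)) ⊗ₜ[K] v (k+1))) ∈ commonRels n :=
      Or.inr ⟨k, hk1, hk2, rfl⟩
    -- split the sums
    have hnot : k ∉ Icc (k+1) n := by simp [mem_Icc]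
    have hkn : k ≤ n := le_of_lt hk2
    rw [Icc_split k n hkn, sum_insert hnot, sum_insert hnot]
    simp only [sub_self, zpow_zero, one_smul]
    -- rewrite the tails
    rw [show (∑ i ∈ Icc (k+1) n, (-q) ^ (k - i) • (v (-i) ⊗ₜ[K] v i))
          = (-(q⁻¹)) • ∑ i ∈ Icc (k+1) n, (-q) ^ (k + 1 - i) • (v (-i) ⊗ₜ[K] v i) by
        rw [smul_sum]; exact sum_congr rfl fun i _ => smulA k i _]
    rw [show (∑ i ∈ Icc (k+1) n, (-q) ^ (i - k) • (v i ⊗ₜ[K] v (-i)))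
          = (-q) • ∑ i ∈ Icc (k+1) n, (-q) ^ (i - (k + 1)) • (v i ⊗ₜ[K] v (-i)) by
        rw [smul_sum]; exact sum_congr rfl fun i _ => smulB k i _]
    -- apply the key algebraic identity
    have hc : q * q⁻¹ = 1 := mul_inv_cancel₀ hq0
    have h1 : μaux (m+1) = 1 + q⁻¹ * q⁻¹ * μaux m := rfl
    have h2 : μaux (m+1) = q ^ (-(2 * ((m:ℤ)+1))) + μaux m := μaux_rec m
    have hkey := key (v (-k) ⊗ₜ[K] v k) (v k ⊗ₜ[K] v (-k))
      (v (-(k+1)) ⊗ₜ[K] v (k+1)) (v (k+1) ⊗ₜ[K] v (-(k+1)))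
      (∑ i ∈ Icc (k+1) n, (-q) ^ (k + 1 - i) • (v (-i) ⊗ₜ[K] v i))
      (∑ i ∈ Icc (k+1) n, (-q) ^ (i - (k + 1)) • (v i ⊗ₜ[K] v (-i)))
      q q⁻¹ (q ^ (-(2 * ((m:ℤ)+1)))) (q ^ (-(2 * (m:ℤ)))) (μaux (m+1)) (μaux m)
      hc (Xsplit m) h1 h2
    rw [hkey]
    exact add_mem (Submodule.smul_mem _ _ ih')
      (Submodule.smul_mem _ _ (Submodule.subset_span hr))

theorem stmt2 (n : ℕ) (hn : 2 ≤ n) :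
    (∑ i ∈ Icc (1:ℤ) (n:ℤ), (-q) ^ (-(i-1)) • (v (-i) ⊗ₜ[K] v i))
      + q ^ (-(2*(n:ℤ)-2)) •
        (∑ i ∈ Icc (1:ℤ) (n:ℤ), (-q) ^ (i-1) • (v i ⊗ₜ[K] v (-i)))
      ∈ W₁ n := by
  have hcast : ((n - 1 : ℕ) : ℤ) = (n : ℤ) - 1 := by
    have : 1 ≤ n := by omega
    push_cast [this]; ring
  have hm : (((n - 1 : ℕ)) : ℤ) < (n : ℤ) := by omega
  have h := main (n : ℤ) (n - 1) hm
  rw [hcast] at h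
  rw [show (n:ℤ) - ((n:ℤ) - 1) = 1 by ring] at h
  have hA : (∑ i ∈ Icc (1:ℤ) (n:ℤ), (-q) ^ (1 - i) • (v (-i) ⊗ₜ[K] v i))
      = ∑ i ∈ Icc (1:ℤ) (n:ℤ), (-q) ^ (-(i-1)) • (v (-i) ⊗ₜ[K] v i) := by
    refine sum_congr rfl fun i _ => ?_
    congr 2
    ring
  rw [hA, show -(2 * ((n:ℤ) - 1)) = -(2*(n:ℤ)-2) by ring] at h
  -- now h : G - μ • (A₁ + B₁) ∈ span commonRels
  have hs : (v (-1) ⊗ₜ[K] v 1 + v 1 ⊗ₜ[K] v (-1)) ∈ W₁ (n : ℤ) := by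
    rw [add_comm]
    exact Submodule.subset_span (Set.mem_union_right _ rfl)
  have hsub : Submodule.span K (commonRels (n:ℤ)) ≤ W₁ (n:ℤ) :=
    Submodule.span_mono Set.subset_union_left
  have h2 := add_mem (hsub h) (Submodule.smul_mem _ (μaux (n-1)) hs)
  rw [sub_add_cancel] at h2
  exact h2
end
end

section
/- With V and W₂ as above (relations including v_{−n} ⊗ v_n + q² v_n ⊗ v_{−n}), for every 1 ≤ i ≤ n one has v_{−i} ⊗ v_i ≡ −q² v_i ⊗ v_{−i} + (1 − q²) ∑_{k=1}^{n−i} (−q)^{k} v_{i+k} ⊗ v_{−(i+k)} modulo W₂. -/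
open TensorProduct Finset

noncomputable section

lemma q_ne : (q : K) ≠ 0 := RatFunc.X_ne_zero

lemma nq_ne : (-q : K) ≠ 0 := neg_ne_zero.mpr q_ne

lemma Ioc_zero_eq (X : ℤ) : Ioc (0:ℤ) X = Icc 1 X := by
  ext k; simp [Int.lt_iff_add_one_le]

lemma Ssplit (n i : ℤ) (h : i < n) :
    ∑ k ∈ Icc (1:ℤ) (n-i), (-q) ^ k • (v (i+k) ⊗ₜ[K] v (-(i+k)))
      = (-q) • (v (i+1) ⊗ₜ[K] v (-(i+1)))
        + (-q) • ∑ k ∈ Icc (1:ℤ) (n-(i+1)), (-q) ^ k • (v (i+1+k) ⊗ₜ[K] v (-(i+1+k))) := by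
  have h1 : (1:ℤ) ≤ n - i := by omega
  rw [← Finset.Ioc_insert_left h1, Finset.sum_insert Finset.left_notMem_Ioc]
  have hmap : Ioc (1:ℤ) (n-i) = (Icc (1:ℤ) (n-(i+1))).map (addLeftEmbedding 1) := by
    rw [Finset.map_add_left_Icc]
    have : Ioc (1:ℤ) (n-i) = Icc (1+1) (1+(n-(i+1))) := by
      rw [show (1:ℤ)+(n-(i+1)) = n - i by ring]
      ext k; simp only [Finset.mem_Ioc, Finset.mem_Icc]; omega
    exact this
  rw [hmap, Finset.sum_map, Finset.smul_sum]
  congr 1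
  · rw [zpow_one]
  · refine Finset.sum_congr rfl fun k hk => ?_
    simp only [addLeftEmbedding_apply]
    rw [show i + (1+k) = i+1+k by ring, smul_smul, ← zpow_one_add₀ nq_ne]

lemma mod_id {F M : Type} [Field F] [AddCommGroup M] [Module F M] (Q : F) (A B C D S : M) :
    A + Q ^ 2 • B - (1 - Q ^ 2) • ((-Q) • C + (-Q) • S)
    = (A + Q ^ 2 • B + Q • (C + D)) + (-Q) • (D + Q ^ 2 • C - (1 - Q ^ 2) • S) := by
  module

lemma aux5 (n : ℤ) (m : ℕ) : ∀ i : ℤ, 1 ≤ i → i + m = n →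
    v (-i) ⊗ₜ[K] v i + q ^ 2 • (v i ⊗ₜ[K] v (-i))
      - (1 - q ^ 2) • (∑ k ∈ Icc (1:ℤ) (n-i), (-q) ^ k • (v (i+k) ⊗ₜ[K] v (-(i+k))))
      ∈ W₂ n := by
  induction m with
  | zero =>
    intro i h1 h2
    obtain rfl : i = n := by omega
    rw [show Icc (1:ℤ) (i - i) = ∅ from Icc_eq_empty (by omega)]
    simp only [Finset.sum_empty, smul_zero, sub_zero]
    exact Submodule.subset_span (Or.inr rfl)
  | succ m ih =>
    intro i h1 h2
    have hi : i < n := by omega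
    have hIH := ih (i+1) (by omega) (by omega)
    have hG : v (-i) ⊗ₜ[K] v i + q ^ 2 • (v i ⊗ₜ[K] v (-i)) +
        q • (v (i+1) ⊗ₜ[K] v (-(i+1)) + v (-(i+1)) ⊗ₜ[K] v (i+1)) ∈ W₂ n :=
      Submodule.subset_span (Or.inl (Or.inr ⟨i, h1, hi, rfl⟩))
    have key : v (-i) ⊗ₜ[K] v i + q ^ 2 • (v i ⊗ₜ[K] v (-i))
        - (1 - q ^ 2) • (∑ k ∈ Icc (1:ℤ) (n-i), (-q) ^ k • (v (i+k) ⊗ₜ[K] v (-(i+k))))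
        = (v (-i) ⊗ₜ[K] v i + q ^ 2 • (v i ⊗ₜ[K] v (-i)) +
            q • (v (i+1) ⊗ₜ[K] v (-(i+1)) + v (-(i+1)) ⊗ₜ[K] v (i+1)))
          + (-q) • (v (-(i+1)) ⊗ₜ[K] v (i+1) + q ^ 2 • (v (i+1) ⊗ₜ[K] v (-(i+1)))
            - (1 - q ^ 2) • (∑ k ∈ Icc (1:ℤ) (n-(i+1)),
                (-q) ^ k • (v (i+1+k) ⊗ₜ[K] v (-(i+1+k))))) := by
      rw [Ssplit n i hi]
      exact mod_id (M := V ⊗[K] V) q (v (-i) ⊗ₜ[K] v i) (v i ⊗ₜ[K] v (-i))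
        (v (i+1) ⊗ₜ[K] v (-(i+1))) (v (-(i+1)) ⊗ₜ[K] v (i+1))
        (∑ k ∈ Icc (1:ℤ) (n-(i+1)), (-q) ^ k • (v (i+1+k) ⊗ₜ[K] v (-(i+1+k))))
    rw [key]
    exact Submodule.add_mem _ hG (Submodule.smul_mem _ _ hIH)

theorem stmt5 (n : ℕ) (hn : 2 ≤ n) (i : ℤ) (h1 : 1 ≤ i) (h2 : i ≤ n) :
    v (-i) ⊗ₜ[K] v i + q ^ 2 • (v i ⊗ₜ[K] v (-i))
      - (1 - q ^ 2) • (∑ k ∈ Icc (1:ℤ) ((n:ℤ)-i), (-q) ^ (k:ℤ) • (v (i+k) ⊗ₜ[K] v (-(i+k))))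
      ∈ W₂ n := by
  exact aux5 n ((n:ℤ) - i).toNat i h1 (by omega)
end
end

section
/- Let u₀ = ∑_{i=1}^{n} (−q)^{i−1} v_i ⊗ v_{−i} and u₀′ = ∑_{i=1}^{n} (−q)^{−(i−1)} v_{−i} ⊗ v_i in V ⊗ V. If W is the subspace spanned by the common relations together with both v_1 ⊗ v_{−1} + v_{−1} ⊗ v_1 and v_{−n} ⊗ v_n + q² v_n ⊗ v_{−n} (the C_n^{(1)} wedge relations), then u₀ ≡ 0 and u₀′ ≡ 0 modulo W, provided q^{2n} ≠ 1 (which holds in ℚ(q)). -/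
open TensorProduct Finset

noncomputable section

/-- the `C_n^{(1)}` wedge relations: common relations plus both extra ones -/
def WC (n : ℤ) : Submodule K (V ⊗[K] V) :=
  Submodule.span K (commonRels n ∪
    {v 1 ⊗ₜ[K] v (-1) + v (-1) ⊗ₜ[K] v 1,
     v (-n) ⊗ₜ[K] v n + q ^ 2 • (v n ⊗ₜ[K] v (-n))})

lemma aux_sum_Icc {M : Type*} [AddCommMonoid M] (n : ℕ) (F : ℤ → M) :
    ∑ i ∈ Icc (1:ℤ) (n:ℤ), F i = ∑ k ∈ Finset.range n, F (k+1) := by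
  refine Finset.sum_nbij' (fun i => (i-1).toNat) (fun k => (k:ℤ)+1) ?_ ?_ ?_ ?_ ?_ <;>
    intro a ha <;> simp only [Finset.mem_Icc, Finset.mem_range] at ha ⊢
  · omega
  · omega
  · omega
  · omega
  · congr 1; omega

lemma aux1 {F M : Type*} [Field F] [AddCommGroup M] [Module F M] (Q : F) (f g : ℤ → M) (n : ℕ) :
    (Q^2-1) • ∑ k ∈ Finset.range (n+1), (-Q)^k • f (k+1) + (f 1 + g 1)
      = ∑ k ∈ Finset.range n, (-Q)^k • (g (k+1) + Q^2 • f (k+1) + Q • (f (k+1+1) + g (k+1+1)))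
        + (-Q)^n • (g (n+1) + Q^2 • f (n+1)) := by
  induction n with
  | zero => simp; module
  | succ m ih =>
    conv_rhs => rw [Finset.sum_range_succ]
    conv_lhs => rw [Finset.sum_range_succ]
    have h : f 1 + g 1 = (∑ k ∈ Finset.range m, (-Q)^k • (g (k+1) + Q^2 • f (k+1) + Q • (f (k+1+1) + g (k+1+1)))
        + (-Q)^m • (g (m+1) + Q^2 • f (m+1)))
        - (Q^2-1) • ∑ k ∈ Finset.range (m+1), (-Q)^k • f (k+1) := by
      rw [← ih]; abel
    rw [h]
    push_cast
    module

lemma aux2 {F M : Type*} [Field F] [AddCommGroup M] [Module F M] (Q c : F) (hc : Q * c = -1)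
    (f g : ℤ → M) (n : ℕ) :
    (1-Q^2) • ∑ k ∈ Finset.range (n+1), c^k • g (k+1) + Q^2 • (f 1 + g 1)
      = ∑ k ∈ Finset.range n, c^k • (g (k+1) + Q^2 • f (k+1) + Q • (f (k+1+1) + g (k+1+1)))
        + c^n • (g (n+1) + Q^2 • f (n+1)) := by
  induction n with
  | zero => simp; module
  | succ m ih =>
    conv_rhs => rw [Finset.sum_range_succ]
    conv_lhs => rw [Finset.sum_range_succ]
    have h : Q^2 • (f 1 + g 1) = (∑ k ∈ Finset.range m, c^k • (g (k+1) + Q^2 • f (k+1) + Q • (f (k+1+1) + g (k+1+1)))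
        + c^m • (g (m+1) + Q^2 • f (m+1)))
        - (1-Q^2) • ∑ k ∈ Finset.range (m+1), c^k • g (k+1) := by
      rw [← ih]; abel
    rw [h]
    push_cast
    match_scalars
    all_goals try ring
    all_goals linear_combination (-(Q*c^m)) * hc


lemma aux1' {F M : Type*} [Field F] [AddCommGroup M] [Module F M] (Q : F) (f g : ℤ → M) (n : ℕ) :
    (Q^2-1) • ∑ k ∈ Finset.range (n+1), (-Q)^k • f (k+1)
      = ∑ k ∈ Finset.range n, (-Q)^k • (g (k+1) + Q^2 • f (k+1) + Q • (f (k+1+1) + g (k+1+1)))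
        + (-Q)^n • (g (n+1) + Q^2 • f (n+1)) + (-1 : F) • (f 1 + g 1) := by
  linear_combination (norm := module) aux1 Q f g n

lemma aux2' {F M : Type*} [Field F] [AddCommGroup M] [Module F M] (Q c : F) (hc : Q * c = -1)
    (f g : ℤ → M) (n : ℕ) :
    (1-Q^2) • ∑ k ∈ Finset.range (n+1), c^k • g (k+1)
      = ∑ k ∈ Finset.range n, c^k • (g (k+1) + Q^2 • f (k+1) + Q • (f (k+1+1) + g (k+1+1)))
        + c^n • (g (n+1) + Q^2 • f (n+1)) + (-(Q^2)) • (f 1 + g 1) := by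
  linear_combination (norm := module) aux2 Q c hc f g n

lemma memA (N : ℤ) : v 1 ⊗ₜ[K] v (-1) + v (-1) ⊗ₜ[K] v 1 ∈ WC N :=
  Submodule.subset_span (Or.inr (Set.mem_insert _ _))

lemma memB (N i : ℤ) (h : i = N) :
    v (-i) ⊗ₜ[K] v i + q ^ 2 • (v i ⊗ₜ[K] v (-i)) ∈ WC N := by
  subst h
  exact Submodule.subset_span (Or.inr (Set.mem_insert_iff.2 (Or.inr rfl)))

lemma memR (N i : ℤ) (h1 : 1 ≤ i) (h2 : i < N) :
    v (-i) ⊗ₜ[K] v i + q ^ 2 • (v i ⊗ₜ[K] v (-i)) +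
      q • (v (i+1) ⊗ₜ[K] v (-(i+1)) + v (-(i+1)) ⊗ₜ[K] v (i+1)) ∈ WC N :=
  Submodule.subset_span (Or.inl (Or.inr ⟨i, h1, h2, rfl⟩))

set_option maxHeartbeats 1000000 in
set_option synthInstance.maxHeartbeats 1000000 in
theorem stmt6 (n : ℕ) (hn : 2 ≤ n) (hq : q ^ (2*n) ≠ 1) :
    (∑ i ∈ Icc (1:ℤ) (n:ℤ), (-q) ^ (i-1) • (v i ⊗ₜ[K] v (-i))) ∈ WC n ∧
    (∑ i ∈ Icc (1:ℤ) (n:ℤ), (-q) ^ (-(i-1)) • (v (-i) ⊗ₜ[K] v i)) ∈ WC n := by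
  have hq2 : q ^ 2 - 1 ≠ 0 := by
    intro h
    apply hq
    have h2 : q ^ 2 = 1 := by rwa [sub_eq_zero] at h
    rw [pow_mul, h2, one_pow]
  have hq2' : (1 : K) - q ^ 2 ≠ 0 := by
    intro h
    exact hq2 (by linear_combination -h)
  have hq0 : q ≠ 0 := by
    unfold q
    exact RatFunc.X_ne_zero
  have hc : q * (-q)⁻¹ = -1 := by
    rw [← neg_inv, mul_neg, mul_inv_cancel₀ hq0]
  obtain ⟨m, rfl⟩ : ∃ m, n = m + 2 := ⟨n - 2, by omega⟩
  constructor
  · rw [← Submodule.smul_mem_iff _ hq2, aux_sum_Icc]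
    simp only [add_sub_cancel_right, zpow_natCast]
    have key : (q^2-1) • ∑ k ∈ Finset.range (m+2), (-q)^k • (v (k+1) ⊗ₜ[K] v (-(k+1)))
      = ∑ k ∈ Finset.range (m+1), (-q)^k • (v (-(k+1)) ⊗ₜ[K] v (k+1)
            + q^2 • (v (k+1) ⊗ₜ[K] v (-(k+1)))
            + q • (v (k+1+1) ⊗ₜ[K] v (-(k+1+1)) + v (-(k+1+1)) ⊗ₜ[K] v (k+1+1)))
        + (-q)^(m+1) • (v (-((m:ℤ)+2)) ⊗ₜ[K] v ((m:ℤ)+2)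
            + q^2 • (v ((m:ℤ)+2) ⊗ₜ[K] v (-((m:ℤ)+2))))
        + (-1 : K) • (v 1 ⊗ₜ[K] v (-1) + v (-1) ⊗ₜ[K] v 1) :=
      aux1' q (fun i : ℤ => v i ⊗ₜ[K] v (-i)) (fun i : ℤ => v (-i) ⊗ₜ[K] v i) (m+1)
    rw [key]
    have hN : ((m:ℤ)+2) = ((m+2 : ℕ) : ℤ) := by push_cast; ring
    refine add_mem (add_mem (Submodule.sum_mem _ fun k hk => ?_)
      (Submodule.smul_mem _ _ (memB _ _ hN)))
      (Submodule.smul_mem _ _ (memA _))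
    have hk' : k < m + 1 := Finset.mem_range.1 hk
    exact Submodule.smul_mem _ _ (memR _ ((k:ℤ)+1) (by omega) (by omega))
  · rw [← Submodule.smul_mem_iff _ hq2', aux_sum_Icc]
    simp only [add_sub_cancel_right, zpow_neg, zpow_natCast, ← inv_pow]
    have key : (1-q^2) • ∑ k ∈ Finset.range (m+2), ((-q)⁻¹)^k • (v (-(k+1)) ⊗ₜ[K] v (k+1))
      = ∑ k ∈ Finset.range (m+1), ((-q)⁻¹)^k • (v (-(k+1)) ⊗ₜ[K] v (k+1)
            + q^2 • (v (k+1) ⊗ₜ[K] v (-(k+1)))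
            + q • (v (k+1+1) ⊗ₜ[K] v (-(k+1+1)) + v (-(k+1+1)) ⊗ₜ[K] v (k+1+1)))
        + ((-q)⁻¹)^(m+1) • (v (-((m:ℤ)+2)) ⊗ₜ[K] v ((m:ℤ)+2)
            + q^2 • (v ((m:ℤ)+2) ⊗ₜ[K] v (-((m:ℤ)+2))))
        + (-(q^2)) • (v 1 ⊗ₜ[K] v (-1) + v (-1) ⊗ₜ[K] v 1) :=
      aux2' q (-q)⁻¹ hc (fun i : ℤ => v i ⊗ₜ[K] v (-i)) (fun i : ℤ => v (-i) ⊗ₜ[K] v i) (m+1)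
    rw [key]
    have hN : ((m:ℤ)+2) = ((m+2 : ℕ) : ℤ) := by push_cast; ring
    refine add_mem (add_mem (Submodule.sum_mem _ fun k hk => ?_)
      (Submodule.smul_mem _ _ (memB _ _ hN)))
      (Submodule.smul_mem _ _ (memA _))
    have hk' : k < m + 1 := Finset.mem_range.1 hk
    exact Submodule.smul_mem _ _ (memR _ ((k:ℤ)+1) (by omega) (by omega))
end
end

section
/- Let B^k be the set of sequences (i₁,…,i_k) from J = {±1,…,±n} (type C_n, so condition: i_ν ≺ i_{ν+1} strictly for all ν, in the order 1 ≺ ⋯ ≺ n ≺ −n ≺ ⋯ ≺ −1) satisfying the additional condition: if i_s = p and i_t = −p (for some 1 ≤ s < t ≤ k and 1 ≤ p ≤ n) then s + (k − t + 1) ≤ p. Then the cardinality of B^k equals binom(2n, k) − binom(2n, k−2). -/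
/-- `binom(2n, m)` with the convention that it vanishes for `m < 0`. -/
def c (n : ℕ) (m : ℤ) : ℤ := if m < 0 then 0 else Nat.choose (2*n) m.toNat

/-- Kashiwara–Nakashima columns of height `k` for type `C_n` -/
def KNColumn (n k : ℕ) (s : Fin k → ℤ) : Prop :=
  (∀ ν : Fin k, 1 ≤ |s ν| ∧ |s ν| ≤ n) ∧
  (∀ ν : Fin k, (h : ν.val + 1 < k) → ord n (s ν) < ord n (s ⟨ν.val + 1, h⟩)) ∧
  (∀ st tt : Fin k, ∀ p : ℤ, 1 ≤ p → p ≤ n → st.val < tt.val → s st = p → s tt = -p →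
      ((st.val : ℤ) + 1) + ((k : ℤ) - ((tt.val : ℤ) + 1) + 1) ≤ p)

/-!
A column is determined by its set of entries `S ⊆ {±1, …, ±n}`, and the Kashiwara–Nakashima
condition becomes `#{x ∈ S | |x| ≤ p} ≤ p` whenever `p, -p ∈ S`. The letters `±(n+1)` only
enter this condition at `p = n + 1`, where it says `#S ≤ n + 1`. Sorting the admissible sets of
size `k ≤ n + 1` by which of `±(n+1)` they contain therefore gives
`a(n+1, k) = a(n, k) + 2 a(n, k-1) + a(n, k-2)`, the recursion of `binom(2n, k)` (Vandermonde
with `binom(2, ·)`). At `k = n + 1` both sides vanish: admissible subsets of `{±1, …, ±n}` have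
at most `n` elements, and `binom(2n, n+1) = binom(2n, n-1)`.
-/

open Finset

lemma Fin.strictMono_iff_lt_of_add_one_lt {α : Type*} [Preorder α] {k : ℕ} {f : Fin k → α} :
    StrictMono f ↔ ∀ ν : Fin k, (h : ν.val + 1 < k) → f ν < f ⟨ν.val + 1, h⟩ := by
  cases k with
  | zero => exact ⟨fun _ ν => ν.elim0, fun _ ν => ν.elim0⟩
  | succ k =>
    rw [Fin.strictMono_iff_lt_succ]
    exact ⟨fun h ν hν => h ⟨ν, by omega⟩, fun h ν => h ν.castSucc (by simp)⟩

lemma StrictMono.eq_of_image_eq {α β : Type*} [DecidableEq α] [LinearOrder β] {r : α → β}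
    {A : Set α} (hr : Set.InjOn r A) {k : ℕ} {s₁ s₂ : Fin k → α}
    (hA₁ : ∀ ν, s₁ ν ∈ A) (hA₂ : ∀ ν, s₂ ν ∈ A)
    (h₁ : StrictMono (r ∘ s₁)) (h₂ : StrictMono (r ∘ s₂))
    (h : univ.image s₁ = univ.image s₂) : s₁ = s₂ := by
  have hrange : Set.range (r ∘ s₁) = Set.range (r ∘ s₂) := by
    rw [Set.range_comp, Set.range_comp, ← Fintype.coe_image_univ, ← Fintype.coe_image_univ, h]
  have hcomp := (h₁.range_inj h₂).mp hrange
  exact funext fun ν => hr (hA₁ ν) (hA₂ ν) (congrFun hcomp ν)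

lemma exists_strictMono_comp_image_eq {α β : Type*} [DecidableEq α] [LinearOrder β]
    {r : α → β} {S : Finset α} (hr : Set.InjOn r S) {k : ℕ} (hk : #S = k) :
    ∃ s : Fin k → α, StrictMono (r ∘ s) ∧ univ.image s = S := by
  classical
  have hcard : #(S.image r) = k := by rw [card_image_of_injOn hr, hk]
  set e := (S.image r).orderEmbOfFin hcard
  have hpre : ∀ ν, ∃ a ∈ S, r a = e ν := fun ν =>
    mem_image.mp ((S.image r).orderEmbOfFin_mem hcard ν)
  choose s hsS hs using hpre
  have hrs : r ∘ s = e := funext hs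
  refine ⟨s, hrs ▸ e.strictMono, ?_⟩
  refine eq_of_subset_of_card_le (fun a ha => ?_) ?_
  · obtain ⟨ν, -, rfl⟩ := mem_image.mp ha
    exact hsS ν
  · rw [hk, card_image_of_injective _ (hrs ▸ e.injective).of_comp, card_univ, Fintype.card_fin]

noncomputable def alphabet (n : ℕ) : Finset ℤ := (Icc (-(n : ℤ)) n).erase 0

lemma mem_alphabet {n : ℕ} {j : ℤ} : j ∈ alphabet n ↔ 1 ≤ |j| ∧ |j| ≤ n := by
  rw [alphabet, mem_erase, mem_Icc]
  rcases abs_cases j with ⟨h, _⟩ | ⟨h, _⟩ <;> rw [h] <;> omega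

lemma ord_injOn (n : ℕ) : Set.InjOn (ord n) (alphabet n) := by
  intro a ha b hb hab
  have := mem_alphabet.mp ha; have := mem_alphabet.mp hb
  simp only [ord] at hab
  rcases abs_cases a with ⟨h, _⟩ | ⟨h, _⟩ <;> rcases abs_cases b with ⟨h', _⟩ | ⟨h', _⟩ <;>
    split_ifs at hab <;> omega

lemma abs_le_iff_ord {n : ℕ} {j p : ℤ} (hj : j ∈ alphabet n) (hp : 0 < p) :
    |j| ≤ p ↔ ord n j ≤ ord n p ∨ ord n (-p) ≤ ord n j := by
  obtain ⟨h₁, h₂⟩ := mem_alphabet.mp hj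
  simp only [ord]
  rcases abs_cases j with ⟨h, _⟩ | ⟨h, _⟩ <;> rw [h] at h₁ h₂ ⊢ <;> split_ifs <;> omega

lemma ord_lt_ord_neg {n : ℕ} {p q : ℤ} (hp : 0 < p) (hpn : p ≤ n) (hq : 0 < q) (hqn : q ≤ n) :
    ord n p < ord n (-q) := by
  simp only [ord]; split_ifs <;> omega

/-- For a column with entry set `S`, the entries `≼ p` are those of `S ∩ [1, p]` and the entries
`≽ -p` those of `S ∩ [-p, -1]`, so the condition `s + (k - t + 1) ≤ p` reads as follows. -/
def IsAdmissible (S : Finset ℤ) : Prop :=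
  ∀ p ∈ S, 0 < p → -p ∈ S → (#{x ∈ S | |x| ≤ p} : ℤ) ≤ p

instance : DecidablePred IsAdmissible := fun S => by unfold IsAdmissible; infer_instance

section columns

variable {n k : ℕ} {s : Fin k → ℤ}

lemma card_filter_abs_le_image (hJ : ∀ ν, s ν ∈ alphabet n) (hM : StrictMono (ord n ∘ s))
    {st tt : Fin k} {p : ℤ} (hp : 0 < p) (hst : s st = p) (htt : s tt = -p) :
    (#{x ∈ univ.image s | |x| ≤ p} : ℤ) = (st + 1 : ℤ) + (k - tt) := by
  have hpn : p ≤ n := hst ▸ (le_abs_self _).trans (mem_alphabet.mp (hJ st)).2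
  have hlt : st < tt := hM.lt_iff_lt.mp (by
    simpa [hst, htt] using ord_lt_ord_neg hp hpn hp hpn)
  have hfilter : univ.filter (fun ν => |s ν| ≤ p) = Iic st ∪ Ici tt := by
    ext ν
    simp only [mem_filter, mem_univ, true_and, mem_union, mem_Iic, mem_Ici]
    rw [abs_le_iff_ord (hJ ν) hp, ← htt, ← hst, ← hM.le_iff_le, ← hM.le_iff_le]
    rfl
  have hdisj : Disjoint (Iic st) (Ici tt) := disjoint_left.mpr fun ν h₁ h₂ => by
    simp only [mem_Iic, mem_Ici] at h₁ h₂; exact absurd (h₂.trans h₁) (not_le.mpr hlt)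
  rw [filter_image, card_image_of_injective _ hM.injective.of_comp, hfilter,
    card_union_of_disjoint hdisj, Fin.card_Iic, Fin.card_Ici]
  push_cast [Nat.cast_sub tt.isLt.le]
  ring

lemma isAdmissible_image_iff (hJ : ∀ ν, s ν ∈ alphabet n) (hM : StrictMono (ord n ∘ s)) :
    IsAdmissible (univ.image s) ↔
      ∀ st tt : Fin k, ∀ p : ℤ, 1 ≤ p → p ≤ n → st.val < tt.val → s st = p → s tt = -p →
        ((st.val : ℤ) + 1) + ((k : ℤ) - ((tt.val : ℤ) + 1) + 1) ≤ p := by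
  constructor
  · intro hadm st tt p hp _ _ hst htt
    have := hadm p (hst ▸ mem_image_of_mem s (mem_univ st)) hp
      (htt ▸ mem_image_of_mem s (mem_univ tt))
    rw [card_filter_abs_le_image hJ hM hp hst htt] at this
    linarith
  · intro hKN p hp hp0 hnp
    obtain ⟨st, -, hst⟩ := mem_image.mp hp
    obtain ⟨tt, -, htt⟩ := mem_image.mp hnp
    have hpn : p ≤ n := hst ▸ (le_abs_self _).trans (mem_alphabet.mp (hJ st)).2
    have hlt : st < tt := hM.lt_iff_lt.mp (by
      simpa [hst, htt] using ord_lt_ord_neg hp0 hpn hp0 hpn)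
    rw [card_filter_abs_le_image hJ hM hp0 hst htt]
    linarith [hKN st tt p hp0 hpn hlt hst htt]

lemma kNColumn_iff :
    KNColumn n k s ↔
      (∀ ν, s ν ∈ alphabet n) ∧ StrictMono (ord n ∘ s) ∧ IsAdmissible (univ.image s) := by
  simp only [KNColumn, ← mem_alphabet, ← Function.comp_apply (f := ord n),
    ← Fin.strictMono_iff_lt_of_add_one_lt]
  constructor
  · rintro ⟨hJ, hM, hKN⟩
    exact ⟨hJ, hM, (isAdmissible_image_iff hJ hM).mpr hKN⟩
  · rintro ⟨hJ, hM, hadm⟩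
    exact ⟨hJ, hM, (isAdmissible_image_iff hJ hM).mp hadm⟩

end columns

/-- Sizes are integers so that, as for `c`, a negative size gives the empty family. -/
noncomputable def admissibleSets (n : ℕ) (k : ℤ) : Finset (Finset ℤ) :=
  {S ∈ (alphabet n).powerset | (#S : ℤ) = k ∧ IsAdmissible S}

lemma mem_admissibleSets {n : ℕ} {k : ℤ} {S : Finset ℤ} :
    S ∈ admissibleSets n k ↔ S ⊆ alphabet n ∧ (#S : ℤ) = k ∧ IsAdmissible S := by
  rw [admissibleSets, mem_filter, mem_powerset]

theorem card_kNColumn (n k : ℕ) :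
    Nat.card {s : Fin k → ℤ // KNColumn n k s} = #(admissibleSets n k) := by
  have hmem : ∀ s, KNColumn n k s → univ.image s ∈ admissibleSets n k := fun s hs => by
    obtain ⟨hJ, hM, hadm⟩ := kNColumn_iff.mp hs
    refine mem_admissibleSets.mpr ⟨fun x hx => ?_, ?_, hadm⟩
    · obtain ⟨ν, -, rfl⟩ := mem_image.mp hx
      exact hJ ν
    · rw [card_image_of_injective _ hM.injective.of_comp, card_univ, Fintype.card_fin]
  let f : {s // KNColumn n k s} → admissibleSets n k := fun s => ⟨univ.image s.1, hmem s.1 s.2⟩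
  have hf : Function.Bijective f := by
    constructor
    · rintro ⟨s₁, h₁⟩ ⟨s₂, h₂⟩ h
      obtain ⟨hJ₁, hM₁, -⟩ := kNColumn_iff.mp h₁
      obtain ⟨hJ₂, hM₂, -⟩ := kNColumn_iff.mp h₂
      exact Subtype.ext <| StrictMono.eq_of_image_eq (ord_injOn n) hJ₁ hJ₂ hM₁ hM₂
        (congrArg Subtype.val h)
    · rintro ⟨S, hS⟩
      obtain ⟨hsub, hcard, hadm⟩ := mem_admissibleSets.mp hS
      obtain ⟨s, hM, hs⟩ := exists_strictMono_comp_image_eq ((ord_injOn n).mono hsub)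
        (k := k) (by omega)
      have hJ : ∀ ν, s ν ∈ alphabet n := fun ν => hsub (hs ▸ mem_image_of_mem s (mem_univ ν))
      exact ⟨⟨s, kNColumn_iff.mpr ⟨hJ, hM, hs ▸ hadm⟩⟩, Subtype.ext hs⟩
  rw [Nat.card_eq_of_bijective f hf, Nat.card_eq_fintype_card, Fintype.card_coe]

def topLetters (n : ℕ) : Finset ℤ := {(n : ℤ) + 1, -((n : ℤ) + 1)}

lemma alphabet_zero : alphabet 0 = ∅ := by
  ext j; simp only [mem_alphabet, Nat.cast_zero, notMem_empty, iff_false]; omega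

lemma alphabet_succ (n : ℕ) : alphabet (n + 1) = alphabet n ∪ topLetters n := by
  ext j; simp only [mem_union, mem_alphabet, topLetters, mem_insert, mem_singleton]; push_cast
  rcases abs_cases j with ⟨h, _⟩ | ⟨h, _⟩ <;> rw [h] <;> omega

lemma disjoint_alphabet_topLetters (n : ℕ) : Disjoint (alphabet n) (topLetters n) := by
  simp only [disjoint_left, mem_alphabet, topLetters, mem_insert, mem_singleton]
  intro j hj
  rcases abs_cases j with ⟨h, _⟩ | ⟨h, _⟩ <;> rw [h] at hj <;> omega

lemma card_topLetters (n : ℕ) : #(topLetters n) = 2 := by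
  rw [topLetters, card_pair]; omega

lemma sdiff_topLetters_subset {n : ℕ} {S : Finset ℤ} (hS : S ⊆ alphabet (n + 1)) :
    S \ topLetters n ⊆ alphabet n := by
  intro x hx
  rw [mem_sdiff] at hx
  simpa [alphabet_succ, hx.2] using hS hx.1

lemma filter_sdiff_topLetters (S : Finset ℤ) {n : ℕ} {p : ℤ} (hp : p ≤ n) :
    {x ∈ S \ topLetters n | |x| ≤ p} = {x ∈ S | |x| ≤ p} := by
  ext x
  simp only [mem_filter, mem_sdiff, topLetters, mem_insert, mem_singleton]
  constructor
  · exact fun h => ⟨h.1.1, h.2⟩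
  · rintro ⟨hx, hxp⟩
    refine ⟨⟨hx, ?_⟩, hxp⟩
    rcases abs_cases x with ⟨h, _⟩ | ⟨h, _⟩ <;> rw [h] at hxp <;> omega

lemma isAdmissible_iff_sdiff_topLetters {n : ℕ} {S : Finset ℤ} (hS : S ⊆ alphabet (n + 1)) :
    IsAdmissible S ↔
      IsAdmissible (S \ topLetters n) ∧ (topLetters n ⊆ S → (#S : ℤ) ≤ n + 1) := by
  have hbound : ∀ x ∈ S, |x| ≤ (n : ℤ) + 1 := fun x hx => by
    exact_mod_cast (mem_alphabet.mp (hS hx)).2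
  have hfilter_top : {x ∈ S | |x| ≤ (n : ℤ) + 1} = S := filter_true_of_mem hbound
  have htop_sub : topLetters n ⊆ S ↔ (n : ℤ) + 1 ∈ S ∧ -((n : ℤ) + 1) ∈ S := by
    simp [topLetters, insert_subset_iff]
  constructor
  · intro hadm
    refine ⟨fun p hp hp0 hnp => ?_, fun htop => ?_⟩
    · simp only [mem_sdiff, topLetters, mem_insert, mem_singleton] at hp hnp
      have hpn : p ≤ n := by have := hbound p hp.1; rw [abs_of_pos hp0] at this; omega
      rw [filter_sdiff_topLetters S hpn]
      exact hadm p hp.1 hp0 hnp.1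
    · obtain ⟨hp, hnp⟩ := htop_sub.mp htop
      simpa [hfilter_top] using hadm _ hp (by positivity) hnp
  · rintro ⟨hadm, htop⟩ p hp hp0 hnp
    have hpn : p ≤ (n : ℤ) + 1 := by have := hbound p hp; rwa [abs_of_pos hp0] at this
    rcases hpn.eq_or_lt with rfl | hlt
    · rw [hfilter_top]; exact htop (htop_sub.mpr ⟨hp, hnp⟩)
    · have hp_top : p ∉ topLetters n ∧ -p ∉ topLetters n := by
        simp only [topLetters, mem_insert, mem_singleton, not_or]; omega
      rw [← filter_sdiff_topLetters S (by omega : p ≤ n)]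
      exact hadm p (mem_sdiff.mpr ⟨hp, hp_top.1⟩) hp0 (mem_sdiff.mpr ⟨hnp, hp_top.2⟩)

lemma IsAdmissible.card_le {n : ℕ} {S : Finset ℤ} (hadm : IsAdmissible S)
    (hS : S ⊆ alphabet n) : #S ≤ n := by
  induction n generalizing S with
  | zero => simp [subset_empty.mp (alphabet_zero ▸ hS)]
  | succ n ih =>
    rw [isAdmissible_iff_sdiff_topLetters hS] at hadm
    by_cases htop : topLetters n ⊆ S
    · exact_mod_cast hadm.2 htop
    have hlow := ih hadm.1 (sdiff_topLetters_subset hS)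
    have htop_lt : #(S ∩ topLetters n) < 2 :=
      card_topLetters n ▸ card_lt_card ⟨inter_subset_right, fun h => htop (h.trans inter_subset_left)⟩
    have := card_sdiff_add_card_inter S (topLetters n)
    omega

lemma admissibleSets_eq_empty {n : ℕ} {k : ℤ} (hk : n < k) : admissibleSets n k = ∅ := by
  refine eq_empty_of_forall_notMem fun S hS => ?_
  obtain ⟨hsub, hcard, hadm⟩ := mem_admissibleSets.mp hS
  have := hadm.card_le hsub
  omega

lemma card_admissibleSets_zero {k : ℤ} : #(admissibleSets 0 k) = if k = 0 then 1 else 0 := by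
  rw [admissibleSets, alphabet_zero, powerset_empty, filter_singleton]
  by_cases hk : k = 0 <;> simp [hk, eq_comm (a := (0 : ℤ)), IsAdmissible]

lemma card_filter_inter_topLetters_eq {n : ℕ} {k : ℤ} (hk : k ≤ n + 1) {T : Finset ℤ}
    (hT : T ⊆ topLetters n) :
    #{S ∈ admissibleSets (n + 1) k | S ∩ topLetters n = T} = #(admissibleSets n (k - #T)) := by
  have hdisj := disjoint_alphabet_topLetters n
  apply card_nbij' (· \ topLetters n) (· ∪ T)
  · intro S hS
    simp only [coe_filter, Set.mem_ofPred_eq, mem_admissibleSets] at hS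
    obtain ⟨⟨hsub, hcard, hadm⟩, hST⟩ := hS
    simp only [mem_coe]
    refine mem_admissibleSets.mpr ⟨sdiff_topLetters_subset hsub, ?_,
      ((isAdmissible_iff_sdiff_topLetters hsub).mp hadm).1⟩
    have := card_sdiff_add_card_inter S (topLetters n)
    rw [hST] at this
    omega
  · intro S hS
    simp only [coe_filter, mem_coe, Set.mem_ofPred_eq, mem_admissibleSets] at hS ⊢
    obtain ⟨hsub, hcard, hadm⟩ := hS
    have hdisjT : Disjoint S T := (hdisj.mono_left hsub).mono_right hT
    have hsd : (S ∪ T) \ topLetters n = S := by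
      rw [union_sdiff_distrib, sdiff_eq_empty_iff_subset.mpr hT, union_empty,
        sdiff_eq_self_of_disjoint (hdisj.mono_left hsub)]
    have hcardU : (#(S ∪ T) : ℤ) = k := by rw [card_union_of_disjoint hdisjT]; push_cast; omega
    have hsubU : S ∪ T ⊆ alphabet (n + 1) := by
      rw [alphabet_succ]; exact union_subset_union hsub hT
    refine ⟨⟨hsubU, hcardU, ?_⟩, ?_⟩
    · rw [isAdmissible_iff_sdiff_topLetters hsubU, hsd]
      exact ⟨hadm, fun _ => hcardU ▸ hk⟩
    · rw [union_inter_distrib_right, disjoint_iff_inter_eq_empty.mp (hdisj.mono_left hsub),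
        empty_union, inter_eq_left.mpr hT]
  · intro S hS
    simp only [coe_filter, Set.mem_ofPred_eq] at hS
    simp only
    rw [← hS.2, sdiff_union_inter]
  · intro S hS
    simp only [mem_coe, mem_admissibleSets] at hS
    simp only
    rw [union_sdiff_distrib, sdiff_eq_empty_iff_subset.mpr hT, union_empty,
      sdiff_eq_self_of_disjoint (hdisj.mono_left hS.1)]

lemma card_admissibleSets_succ (n : ℕ) {k : ℤ} (hk : k ≤ n + 1) :
    #(admissibleSets (n + 1) k) = #(admissibleSets n k) + 2 * #(admissibleSets n (k - 1))
      + #(admissibleSets n (k - 2)) := by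
  rw [card_eq_sum_card_fiberwise (f := (· ∩ topLetters n)) (t := (topLetters n).powerset)
      (fun S _ => mem_powerset.mpr inter_subset_right),
    sum_congr rfl fun T hT => card_filter_inter_topLetters_eq hk (mem_powerset.mp hT),
    sum_powerset_apply_card (fun m => #(admissibleSets n (k - m))), card_topLetters]
  simp [sum_range_succ]

lemma c_natCast (n j : ℕ) : c n j = (2 * n).choose j := by simp [c]

lemma c_of_neg (n : ℕ) {m : ℤ} (h : m < 0) : c n m = 0 := by simp [c, h]

lemma c_succ (n : ℕ) (k : ℤ) : c (n + 1) k = c n k + 2 * c n (k - 1) + c n (k - 2) := by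
  rcases lt_or_ge k 0 with hk | hk
  · simp [c_of_neg, hk, show k - 1 < 0 by omega, show k - 2 < 0 by omega]
  lift k to ℕ using hk
  match k with
  | 0 => simp [c]
  | 1 => simp [c, mul_add]
  | j + 2 =>
    rw [show ((j + 2 : ℕ) : ℤ) - 1 = (j + 1 : ℕ) by push_cast; ring,
      show ((j + 2 : ℕ) : ℤ) - 2 = j by push_cast; ring, c_natCast, c_natCast, c_natCast,
      c_natCast, show 2 * (n + 1) = 2 * n + 1 + 1 by ring, Nat.choose_succ_succ,
      Nat.choose_succ_succ, Nat.choose_succ_succ (2 * n) (j + 1)]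
    push_cast
    ring

theorem card_admissibleSets (n : ℕ) {k : ℤ} (hk : k ≤ n + 1) :
    (#(admissibleSets n k) : ℤ) = c n k - c n (k - 2) := by
  induction n generalizing k with
  | zero =>
    rw [card_admissibleSets_zero]
    obtain hk | rfl | rfl : k < 0 ∨ k = 0 ∨ k = 1 := by omega
    · simp [c_of_neg, hk, show k ≠ 0 by omega, show k - 2 < 0 by omega]
    · simp [c]
    · simp [c]
  | succ n ih =>
    rcases hk.eq_or_lt with rfl | hlt
    · rw [admissibleSets_eq_empty (by push_cast; omega),
        show ((n + 1 : ℕ) : ℤ) + 1 = (n + 2 : ℕ) by push_cast; ring,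
        show ((n + 2 : ℕ) : ℤ) - 2 = n by push_cast; ring, c_natCast, c_natCast,
        Nat.choose_symm_of_eq_add (by ring)]
      simp
    · rw [card_admissibleSets_succ n (by push_cast at hlt; omega)]
      push_cast at hlt ⊢
      rw [ih (by omega), ih (by omega), ih (by omega), c_succ, c_succ n (k - 2),
        show k - 1 - 2 = k - 2 - 1 by ring]
      ring

theorem stmt15_general (n k : ℕ) (hk : k ≤ n) :
    (Nat.card {s : Fin k → ℤ // KNColumn n k s} : ℤ)
      = c n (k : ℤ) - c n ((k : ℤ) - 2) := by
  rw [card_kNColumn]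
  exact card_admissibleSets n (by omega)

theorem stmt15 (n k : ℕ) (hn : 1 ≤ n) (hk : k ≤ n) :
    (Nat.card {s : Fin k → ℤ // KNColumn n k s} : ℤ)
      = c n (k : ℤ) - c n ((k : ℤ) - 2) :=
  stmt15_general n k hk
end

section
/- Let V be the ℚ(q)-space with basis {v_j : j ∈ J}, J = {±1,…,±n}, and W the A^{(2)†}_{2n−1} wedge-relation subspace. In the quotient V² = (V⊗V)/W, for each i with 1 ≤ i < n one has v_{−i} ∧ v_i = −q² v_i ∧ v_{−i} − q(v_{−i−1} ∧ v_{i+1} + v_{i+1} ∧ v_{−i−1}), and consequently v_1 ∧ v_{−1} − q v_2 ∧ v_{−2} + ⋯ + (−q)^{n−1} v_n ∧ v_{−n} = −q^{2n−2}·(v_{−1} ∧ v_1 − q^{−1} v_{−2} ∧ v_2 + ⋯ + (−q)^{−(n−1)} v_{−n} ∧ v_n). -/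
open TensorProduct Finset

noncomputable section

/-!
Write `aᵢ = vᵢ ∧ v₋ᵢ` and `bᵢ = v₋ᵢ ∧ vᵢ`. The first claim is the defining relation
`bᵢ + q² aᵢ + q (aᵢ₊₁ + bᵢ₊₁) = 0` of `W`. For the second, the relations make the tail sums
telescope:
`∑_{i=k}^{n} ((-q)^{i-1} aᵢ + (-q)^{2n-1-i} bᵢ) = (-q)^{k-1} (1 + q² + ⋯ + q^{2(n-k)}) (aₖ + bₖ)`,
and at `k = 1` this vanishes because `a₁ + b₁ = 0` is the last relation of `W`.
-/

section WedgeSums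

variable {R M : Type*} [CommRing R] [AddCommGroup M] [Module R M]

theorem sum_range_neg_pow_smul_add_eq_geom_sum_smul (t : R) (a b : ℕ → M) (d : ℕ)
    (h : ∀ i < d, b i + t ^ 2 • a i + t • (a (i + 1) + b (i + 1)) = 0) :
    ∑ i ∈ range (d + 1), ((-t) ^ i • a i + (-t) ^ (2 * d - i) • b i) =
      (∑ j ∈ range (d + 1), (t ^ 2) ^ j) • (a 0 + b 0) := by
  induction d generalizing a b with
  | zero => simp
  | succ d ih =>
    have shifted := ih (fun i => a (i + 1)) (fun i => b (i + 1)) fun i hi => h (i + 1) (by omega)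
    have tail : ∑ i ∈ range (d + 1),
        ((-t) ^ (i + 1) • a (i + 1) + (-t) ^ (2 * (d + 1) - (i + 1)) • b (i + 1)) =
          (-t) • ∑ i ∈ range (d + 1), ((-t) ^ i • a (i + 1) + (-t) ^ (2 * d - i) • b (i + 1)) := by
      rw [smul_sum]
      refine sum_congr rfl fun i hi => ?_
      have : 2 * (d + 1) - (i + 1) = 2 * d - i + 1 := by have := mem_range.mp hi; omega
      rw [this, smul_add, smul_smul, smul_smul, pow_succ', pow_succ']
    rw [sum_range_succ', tail, shifted, smul_comm]
    simp only [zero_add, pow_zero, Nat.sub_zero, (even_two_mul (d + 1)).neg_pow]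
    linear_combination (norm := module)
      -(∑ j ∈ range (d + 1), (t ^ 2) ^ j) • h 0 d.succ_pos
        - geom_sum_succ (x := t ^ 2) (n := d + 1) • a 0
        - geom_sum_succ' (x := t ^ 2) (n := d + 1) • b 0

theorem sum_Icc_zpow_smul_eq_neg_zpow_smul_sum {F : Type*} [Field F] [Module F M] (t : F)
    (ht : t ≠ 0) (n : ℕ) (a b : ℤ → M) (h₁ : a 1 + b 1 = 0)
    (h : ∀ i : ℤ, 1 ≤ i → i < n → b i + t ^ 2 • a i + t • (a (i + 1) + b (i + 1)) = 0) :
    ∑ i ∈ Icc (1 : ℤ) n, (-t) ^ (i - 1) • a i =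
      -(t ^ (2 * (n : ℤ) - 2)) • ∑ i ∈ Icc (1 : ℤ) n, (-t) ^ (-(i - 1)) • b i := by
  rcases n with _ | m
  · simp
  have even_exponent : Even (2 * ((m + 1 : ℕ) : ℤ) - 2) := ⟨m, by push_cast; ring⟩
  rw [← even_exponent.neg_zpow, neg_smul, eq_neg_iff_add_eq_zero, smul_sum, ← sum_add_distrib,
    Int.Icc_eq_finset_map, sum_map]
  have core := sum_range_neg_pow_smul_add_eq_geom_sum_smul t (fun j => a (j + 1))
    (fun j => b (j + 1)) m fun i hi => by push_cast; exact h (i + 1) (by omega) (by omega)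
  simp only [Nat.cast_zero, zero_add, h₁, smul_zero] at core
  rw [← core]
  refine sum_congr (by simp) fun j hj_mem => ?_
  have hj : j ≤ m := Nat.lt_succ_iff.mp (mem_range.mp (by simpa using hj_mem))
  have exponent : 2 * ((m + 1 : ℕ) : ℤ) - 2 + -(j : ℤ) = ((2 * m - j : ℕ) : ℤ) := by omega
  simp only [Function.Embedding.trans_apply, Nat.castEmbedding_apply, addLeftEmbedding_apply,
    add_comm (1 : ℤ), add_sub_cancel_right, smul_smul, ← zpow_add₀ (neg_ne_zero.2 ht), exponent,
    zpow_natCast]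

end WedgeSums

def wedge (n i j : ℤ) := Submodule.Quotient.mk (p := W₁ n) (v i ⊗ₜ[K] v j)

theorem wedge_one_neg_one_add_wedge_neg_one_one (n : ℤ) :
    wedge n 1 (-1) + wedge n (-1) 1 = 0 := by
  rw [wedge, wedge, ← Submodule.Quotient.mk_add, Submodule.Quotient.mk_eq_zero]
  exact Submodule.subset_span (Or.inr rfl)

theorem wedge_neg_add_smul_wedge_add_smul_wedge_succ (n i : ℤ) (h₁ : 1 ≤ i) (h₂ : i < n) :
    wedge n (-i) i + q ^ 2 • wedge n i (-i)
      + q • (wedge n (i + 1) (-(i + 1)) + wedge n (-(i + 1)) (i + 1)) = 0 := by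
  simp only [wedge, ← Submodule.Quotient.mk_smul, ← Submodule.Quotient.mk_add,
    Submodule.Quotient.mk_eq_zero]
  exact Submodule.subset_span (Or.inl (Or.inr ⟨i, h₁, h₂, rfl⟩))

theorem wedge_neg_eq (n i : ℤ) (h₁ : 1 ≤ i) (h₂ : i < n) :
    wedge n (-i) i = -(q ^ 2) • wedge n i (-i)
      - q • (wedge n (-(i + 1)) (i + 1) + wedge n (i + 1) (-(i + 1))) := by
  have relation := wedge_neg_add_smul_wedge_add_smul_wedge_succ n i h₁ h₂
  rw [smul_add] at relation
  rw [neg_smul, smul_add]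
  linear_combination (norm := abel) relation

theorem stmt16_general (n : ℕ) :
    (∀ i : ℤ, 1 ≤ i → i < n →
      Submodule.Quotient.mk (p := W₁ n) (v (-i) ⊗ₜ[K] v i)
        = -(q ^ 2) • Submodule.Quotient.mk (p := W₁ n) (v i ⊗ₜ[K] v (-i))
          - q • (Submodule.Quotient.mk (p := W₁ n) (v (-(i+1)) ⊗ₜ[K] v (i+1))
                 + Submodule.Quotient.mk (p := W₁ n) (v (i+1) ⊗ₜ[K] v (-(i+1))))) ∧
    (∑ i ∈ Icc (1:ℤ) (n:ℤ), (-q) ^ (i-1) •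
        Submodule.Quotient.mk (p := W₁ n) (v i ⊗ₜ[K] v (-i))
      = -(q ^ (2*(n:ℤ)-2)) •
        ∑ i ∈ Icc (1:ℤ) (n:ℤ), (-q) ^ (-(i-1)) •
          Submodule.Quotient.mk (p := W₁ n) (v (-i) ⊗ₜ[K] v i)) := by
  refine ⟨wedge_neg_eq n, ?_⟩
  exact sum_Icc_zpow_smul_eq_neg_zpow_smul_sum q RatFunc.X_ne_zero n (fun i => wedge n i (-i))
    (fun i => wedge n (-i) i) (wedge_one_neg_one_add_wedge_neg_one_one n)
    fun i => wedge_neg_add_smul_wedge_add_smul_wedge_succ n i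

theorem stmt16 (n : ℕ) (hn : 2 ≤ n) :
    (∀ i : ℤ, 1 ≤ i → i < n →
      Submodule.Quotient.mk (p := W₁ n) (v (-i) ⊗ₜ[K] v i)
        = -(q ^ 2) • Submodule.Quotient.mk (p := W₁ n) (v i ⊗ₜ[K] v (-i))
          - q • (Submodule.Quotient.mk (p := W₁ n) (v (-(i+1)) ⊗ₜ[K] v (i+1))
                 + Submodule.Quotient.mk (p := W₁ n) (v (i+1) ⊗ₜ[K] v (-(i+1))))) ∧
    (∑ i ∈ Icc (1:ℤ) (n:ℤ), (-q) ^ (i-1) •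
        Submodule.Quotient.mk (p := W₁ n) (v i ⊗ₜ[K] v (-i))
      = -(q ^ (2*(n:ℤ)-2)) •
        ∑ i ∈ Icc (1:ℤ) (n:ℤ), (-q) ^ (-(i-1)) •
          Submodule.Quotient.mk (p := W₁ n) (v (-i) ⊗ₜ[K] v i)) :=
  stmt16_general n
end
end
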